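/- The map φ : sl₂(ℂ) → End_ℝ(Herm₂) defined by φ(A)X = AX + XA† is an isomorphism of real Lie algebras from sl₂(ℂ), viewed as a real Lie algebra, onto the Lie algebra so(Herm₂, g) of g-skew-symmetric endomorphisms of Herm₂, where g is the polarization of the determinant quadratic form. -/
import Mathlib


open Matrix

/-- The real vector space of Hermitian 2×2 complex matrices. -/
noncomputable def Herm2 : Submodule ℝ (Matrix (Fin 2) (Fin 2) ℂ) where
  carrier := {X | Xᴴ = X}
  zero_mem' := by simp
  add_mem' := by
    intro a b ha hb
    simp only [Set.mem_setOf_eq] at *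
    rw [Matrix.conjTranspose_add, ha, hb]
  smul_mem' := by
    intro r X hX
    simp only [Set.mem_setOf_eq] at *
    rw [Matrix.conjTranspose_smul, star_trivial, hX]

/-- The determinant quadratic form on Hermitian matrices (of signature (1,3)). -/
noncomputable def qdet (X : Herm2) : ℝ := ((X : Matrix (Fin 2) (Fin 2) ℂ).det).re

/-- The polarization of the determinant quadratic form on `Herm2`. -/
noncomputable def gdet (X Y : Herm2) : ℝ := (qdet (X + Y) - qdet X - qdet Y) / 2

/-- The map `φ(A) : X ↦ AX + XA†`, an `ℝ`-linear endomorphism of `Herm2`. -/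
noncomputable def phi (A : Matrix (Fin 2) (Fin 2) ℂ) : Herm2 →ₗ[ℝ] Herm2 where
  toFun X := ⟨A * (X : Matrix (Fin 2) (Fin 2) ℂ) + (X : Matrix (Fin 2) (Fin 2) ℂ) * Aᴴ, by
    have hX : (X : Matrix (Fin 2) (Fin 2) ℂ)ᴴ = X := X.2
    show (A * (X : Matrix (Fin 2) (Fin 2) ℂ) + (X : Matrix (Fin 2) (Fin 2) ℂ) * Aᴴ)ᴴ = _
    rw [Matrix.conjTranspose_add, Matrix.conjTranspose_mul, Matrix.conjTranspose_mul,
      Matrix.conjTranspose_conjTranspose, hX]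
    exact add_comm _ _⟩
  map_add' X Y := by
    apply Subtype.ext
    simp only [Submodule.coe_add, Matrix.mul_add, Matrix.add_mul]
    abel
  map_smul' r X := by
    apply Subtype.ext
    simp only [SetLike.val_smul, RingHom.id_apply, Matrix.mul_smul, Matrix.smul_mul, smul_add]

open Matrix Complex

lemma phi_coe (A : Matrix (Fin 2) (Fin 2) ℂ) (X : Herm2) :
    (phi A X : Matrix (Fin 2) (Fin 2) ℂ) = A * X + X * Aᴴ := rfl

lemma gdet_eq (X Y : Herm2) : gdet X Y =
    ((X : Matrix (Fin 2) (Fin 2) ℂ) 0 0 * (Y : Matrix (Fin 2) (Fin 2) ℂ) 1 1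
     + (Y : Matrix (Fin 2) (Fin 2) ℂ) 0 0 * (X : Matrix (Fin 2) (Fin 2) ℂ) 1 1
     - (X : Matrix (Fin 2) (Fin 2) ℂ) 0 1 * (Y : Matrix (Fin 2) (Fin 2) ℂ) 1 0
     - (Y : Matrix (Fin 2) (Fin 2) ℂ) 0 1 * (X : Matrix (Fin 2) (Fin 2) ℂ) 1 0).re / 2 := by
  unfold gdet qdet
  simp only [Submodule.coe_add, Matrix.det_fin_two, Matrix.add_apply]
  simp only [Complex.add_re, Complex.sub_re, Complex.mul_re, Complex.add_im, Complex.mul_im]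
  ring
open Matrix Complex

noncomputable def E1 : Herm2 := ⟨!![1,0;0,0], by
  show _ᴴ = _; ext i j; fin_cases i <;> fin_cases j <;> simp [Matrix.conjTranspose_apply]⟩
noncomputable def E2 : Herm2 := ⟨!![0,0;0,1], by
  show _ᴴ = _; ext i j; fin_cases i <;> fin_cases j <;> simp [Matrix.conjTranspose_apply]⟩
noncomputable def E3 : Herm2 := ⟨!![0,1;1,0], by
  show _ᴴ = _; ext i j; fin_cases i <;> fin_cases j <;> simp [Matrix.conjTranspose_apply]⟩
noncomputable def E4 : Herm2 := ⟨!![0,Complex.I;-Complex.I,0], by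
  show _ᴴ = _; ext i j; fin_cases i <;> fin_cases j <;> simp [Matrix.conjTranspose_apply]⟩

lemma herm_facts (X : Herm2) :
    ((X : Matrix (Fin 2) (Fin 2) ℂ) 0 0).im = 0 ∧ ((X : Matrix (Fin 2) (Fin 2) ℂ) 1 1).im = 0 ∧
    (X : Matrix (Fin 2) (Fin 2) ℂ) 1 0 = (starRingEnd ℂ) ((X : Matrix (Fin 2) (Fin 2) ℂ) 0 1) := by
  have h : (X : Matrix (Fin 2) (Fin 2) ℂ)ᴴ = X := X.2
  have h00 := congrFun (congrFun h 0) 0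
  have h11 := congrFun (congrFun h 1) 1
  have h10 := congrFun (congrFun h 1) 0
  simp only [Matrix.conjTranspose_apply] at h00 h11 h10
  refine ⟨?_, ?_, ?_⟩
  · have := congrArg Complex.im h00; simp at this; linarith
  · have := congrArg Complex.im h11; simp at this; linarith
  · exact h10.symm

lemma span4 (X : Herm2) : X =
    (((X : Matrix (Fin 2) (Fin 2) ℂ) 0 0).re) • E1 + (((X : Matrix (Fin 2) (Fin 2) ℂ) 1 1).re) • E2
    + (((X : Matrix (Fin 2) (Fin 2) ℂ) 0 1).re) • E3 + (((X : Matrix (Fin 2) (Fin 2) ℂ) 0 1).im) • E4 := by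
  obtain ⟨h00, h11, h10⟩ := herm_facts X
  apply Subtype.ext
  simp only [Submodule.coe_add, SetLike.val_smul, E1, E2, E3, E4]
  ext i j
  fin_cases i <;> fin_cases j <;>
    simp only [Matrix.add_apply, Matrix.smul_apply, Matrix.cons_val', Matrix.cons_val_zero,
      Matrix.cons_val_one, Matrix.head_cons, Matrix.head_fin_const, Matrix.empty_val',
      Matrix.cons_val_fin_one, h10, smul_eq_mul, Complex.real_smul] <;>
    apply Complex.ext <;>
    simp [Complex.add_re, Complex.add_im, Complex.mul_re, Complex.mul_im, h00, h11, h10,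
      Complex.conj_re, Complex.conj_im] <;> ring
lemma part1 (A B : Matrix (Fin 2) (Fin 2) ℂ) :
    phi (A * B - B * A) = phi A ∘ₗ phi B - phi B ∘ₗ phi A := by
  apply LinearMap.ext; intro X
  apply Subtype.ext
  show (A*B - B*A) * (X : Matrix (Fin 2) (Fin 2) ℂ) + (X : Matrix (Fin 2) (Fin 2) ℂ) * (A*B-B*A)ᴴ = _
  have : ((phi A ∘ₗ phi B - phi B ∘ₗ phi A) X : Matrix (Fin 2) (Fin 2) ℂ)
      = (A * (B * X + X * Bᴴ) + (B * X + X * Bᴴ) * Aᴴ)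
        - (B * (A * X + X * Aᴴ) + (A * X + X * Aᴴ) * Bᴴ) := rfl
  rw [this]
  simp only [Matrix.conjTranspose_sub, Matrix.conjTranspose_mul, Matrix.sub_mul, Matrix.mul_sub,
    Matrix.mul_add, Matrix.add_mul, Matrix.mul_assoc]
  abel

lemma part2 (A B : Matrix (Fin 2) (Fin 2) ℂ) (r s : ℝ) :
    phi (r • A + s • B) = r • phi A + s • phi B := by
  apply LinearMap.ext; intro X
  apply Subtype.ext
  show (r • A + s • B) * (X : Matrix (Fin 2) (Fin 2) ℂ)
      + (X : Matrix (Fin 2) (Fin 2) ℂ) * (r • A + s • B)ᴴ = _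
  have : ((r • phi A + s • phi B) X : Matrix (Fin 2) (Fin 2) ℂ)
      = r • (A * X + (X : Matrix (Fin 2) (Fin 2) ℂ) * Aᴴ) + s • (B * X + (X : Matrix (Fin 2) (Fin 2) ℂ) * Bᴴ) := rfl
  rw [this]
  simp only [Matrix.conjTranspose_add, Matrix.conjTranspose_smul, star_trivial,
    Matrix.add_mul, Matrix.mul_add, Matrix.smul_mul, Matrix.mul_smul, smul_add]
  abel
lemma entry_eq {M N : Matrix (Fin 2) (Fin 2) ℂ} (h : M = N) (i j : Fin 2) : M i j = N i j := by
  rw [h]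

lemma part3 (A B : Matrix (Fin 2) (Fin 2) ℂ) (hA : A.trace = 0) (hB : B.trace = 0)
    (h : phi A = phi B) : A = B := by
  have hAtr : A 0 0 + A 1 1 = 0 := by
    rw [Matrix.trace_fin_two] at hA; exact hA
  have hBtr : B 0 0 + B 1 1 = 0 := by
    rw [Matrix.trace_fin_two] at hB; exact hB
  have h1 : A * (E1 : Matrix (Fin 2) (Fin 2) ℂ) + (E1 : Matrix (Fin 2) (Fin 2) ℂ) * Aᴴ
      = B * (E1 : Matrix (Fin 2) (Fin 2) ℂ) + (E1 : Matrix (Fin 2) (Fin 2) ℂ) * Bᴴ :=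
    congrArg Subtype.val (LinearMap.congr_fun h E1)
  have h2 : A * (E2 : Matrix (Fin 2) (Fin 2) ℂ) + (E2 : Matrix (Fin 2) (Fin 2) ℂ) * Aᴴ
      = B * (E2 : Matrix (Fin 2) (Fin 2) ℂ) + (E2 : Matrix (Fin 2) (Fin 2) ℂ) * Bᴴ :=
    congrArg Subtype.val (LinearMap.congr_fun h E2)
  have h3 : A * (E3 : Matrix (Fin 2) (Fin 2) ℂ) + (E3 : Matrix (Fin 2) (Fin 2) ℂ) * Aᴴ
      = B * (E3 : Matrix (Fin 2) (Fin 2) ℂ) + (E3 : Matrix (Fin 2) (Fin 2) ℂ) * Bᴴ :=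
    congrArg Subtype.val (LinearMap.congr_fun h E3)
  -- extract entries
  have e1a := entry_eq h1 0 0
  have e1b := entry_eq h1 1 0
  have e2a := entry_eq h2 1 1
  have e2b := entry_eq h2 0 1
  have e3a := entry_eq h3 0 1
  simp [E1, E2, E3, Matrix.add_apply, Matrix.mul_apply, Fin.sum_univ_two,
    Matrix.conjTranspose_apply, Matrix.vecMul, dotProduct] at e1a e1b e2a e2b e3a
  have hA11 : A 1 1 = -(A 0 0) := by linear_combination hAtr
  have hB11 : B 1 1 = -(B 0 0) := by linear_combination hBtr
  rw [Complex.ext_iff] at e1a e1b e2a e2b e3a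
  simp only [Complex.add_re, Complex.add_im, Complex.conj_re, Complex.conj_im, hA11, hB11,
    Complex.neg_re, Complex.neg_im] at e1a e1b e2a e2b e3a
  ext i j
  fin_cases i <;> fin_cases j <;> apply Complex.ext <;>
    simp only [hA11, hB11, Complex.neg_re, Complex.neg_im, neg_inj, Fin.isValue, Fin.zero_eta, Fin.mk_one] <;>
    show _ = _
  · linarith [e1a.1]
  · linarith [e1a.2, e3a.2]
  · linarith [e2b.1]
  · linarith [e2b.2]
  · linarith [e1b.1]
  · linarith [e1b.2]
  · linarith [e1a.1]
  · linarith [e1a.2, e3a.2]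
lemma skew_of_phi (A : Matrix (Fin 2) (Fin 2) ℂ) (hA : A.trace = 0) (X Y : Herm2) :
    gdet (phi A X) Y + gdet X (phi A Y) = 0 := by
  obtain ⟨hx0, hx1, hx2⟩ := herm_facts X
  obtain ⟨hy0, hy1, hy2⟩ := herm_facts Y
  have hA11 : A 1 1 = -A 0 0 := by
    rw [Matrix.trace_fin_two] at hA; linear_combination hA
  rw [gdet_eq, gdet_eq]
  simp only [phi_coe, Matrix.add_apply, Matrix.mul_apply, Fin.sum_univ_two,
    Matrix.conjTranspose_apply, hA11, hx2, hy2, Complex.star_def]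
  simp only [Complex.add_re, Complex.sub_re, Complex.mul_re, Complex.mul_im, Complex.add_im,
    Complex.sub_im, Complex.neg_re, Complex.neg_im, Complex.conj_re, Complex.conj_im,
    hx0, hx1, hy0, hy1]
  ring
set_option maxHeartbeats 1000000 in
lemma reverse_dir (C : Herm2 →ₗ[ℝ] Herm2)
    (h : ∀ X Y : Herm2, gdet (C X) Y + gdet X (C Y) = 0) :
    ∃ A : Matrix (Fin 2) (Fin 2) ℂ, A.trace = 0 ∧ phi A = C := by
  set M1 : Matrix (Fin 2) (Fin 2) ℂ := (C E1 : Matrix (Fin 2) (Fin 2) ℂ) with hM1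
  set M2 : Matrix (Fin 2) (Fin 2) ℂ := (C E2 : Matrix (Fin 2) (Fin 2) ℂ) with hM2
  set M3 : Matrix (Fin 2) (Fin 2) ℂ := (C E3 : Matrix (Fin 2) (Fin 2) ℂ) with hM3
  set M4 : Matrix (Fin 2) (Fin 2) ℂ := (C E4 : Matrix (Fin 2) (Fin 2) ℂ) with hM4
  obtain ⟨m1a, m1b, m1c⟩ := herm_facts (C E1)
  obtain ⟨m2a, m2b, m2c⟩ := herm_facts (C E2)
  obtain ⟨m3a, m3b, m3c⟩ := herm_facts (C E3)
  obtain ⟨m4a, m4b, m4c⟩ := herm_facts (C E4)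
  rw [← hM1] at m1a m1b m1c
  rw [← hM2] at m2a m2b m2c
  rw [← hM3] at m3a m3b m3c
  rw [← hM4] at m4a m4b m4c
  have key : ∀ X Y : Herm2,
      ((C X : Matrix (Fin 2) (Fin 2) ℂ) 0 0 * (Y : Matrix (Fin 2) (Fin 2) ℂ) 1 1
       + (Y : Matrix (Fin 2) (Fin 2) ℂ) 0 0 * (C X : Matrix (Fin 2) (Fin 2) ℂ) 1 1
       - (C X : Matrix (Fin 2) (Fin 2) ℂ) 0 1 * (Y : Matrix (Fin 2) (Fin 2) ℂ) 1 0
       - (Y : Matrix (Fin 2) (Fin 2) ℂ) 0 1 * (C X : Matrix (Fin 2) (Fin 2) ℂ) 1 0).re / 2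
      + ((X : Matrix (Fin 2) (Fin 2) ℂ) 0 0 * (C Y : Matrix (Fin 2) (Fin 2) ℂ) 1 1
       + (C Y : Matrix (Fin 2) (Fin 2) ℂ) 0 0 * (X : Matrix (Fin 2) (Fin 2) ℂ) 1 1
       - (X : Matrix (Fin 2) (Fin 2) ℂ) 0 1 * (C Y : Matrix (Fin 2) (Fin 2) ℂ) 1 0
       - (C Y : Matrix (Fin 2) (Fin 2) ℂ) 0 1 * (X : Matrix (Fin 2) (Fin 2) ℂ) 1 0).re / 2 = 0 := by
    intro X Y
    have := h X Y
    rwa [gdet_eq, gdet_eq] at this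
  have cE1 : (E1 : Matrix (Fin 2) (Fin 2) ℂ) = !![1,0;0,0] := rfl
  have cE2 : (E2 : Matrix (Fin 2) (Fin 2) ℂ) = !![0,0;0,1] := rfl
  have cE3 : (E3 : Matrix (Fin 2) (Fin 2) ℂ) = !![0,1;1,0] := rfl
  have cE4 : (E4 : Matrix (Fin 2) (Fin 2) ℂ) = !![0,Complex.I;-Complex.I,0] := rfl
  have q11 : (M1 1 1).re = 0 := by
    have := key E1 E1
    rw [cE1, ← hM1] at this
    simp [Complex.add_re, Complex.sub_re, Complex.mul_re, Complex.conj_re, Complex.conj_im, Complex.I_re, Complex.I_im] at this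
    linarith
  have q22 : (M2 0 0).re = 0 := by
    have := key E2 E2
    rw [cE2, ← hM2] at this
    simp [Complex.add_re, Complex.sub_re, Complex.mul_re, Complex.conj_re, Complex.conj_im, Complex.I_re, Complex.I_im] at this
    linarith
  have q12 : (M1 0 0).re + (M2 1 1).re = 0 := by
    have := key E1 E2
    rw [cE1, cE2, ← hM1, ← hM2] at this
    simp [Complex.add_re, Complex.sub_re, Complex.mul_re, Complex.conj_re, Complex.conj_im, Complex.I_re, Complex.I_im] at this
    linarith
  have q33 : (M3 0 1).re = 0 := by
    have := key E3 E3
    rw [cE3, ← hM3] at this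
    simp [Complex.add_re, Complex.sub_re, Complex.mul_re, Complex.conj_re, Complex.conj_im, Complex.I_re, Complex.I_im, m3c] at this
    linarith
  have q44 : (M4 0 1).im = 0 := by
    have := key E4 E4
    rw [cE4, ← hM4] at this
    simp [Complex.add_re, Complex.sub_re, Complex.mul_re, Complex.conj_re, Complex.conj_im, Complex.I_re, Complex.I_im, m4c] at this
    linarith
  have q34 : (M3 0 1).im + (M4 0 1).re = 0 := by
    have := key E3 E4
    rw [cE3, cE4, ← hM3, ← hM4] at this
    simp [Complex.add_re, Complex.sub_re, Complex.mul_re, Complex.conj_re, Complex.conj_im, Complex.I_re, Complex.I_im, m3c, m4c] at this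
    linarith
  have q13 : 2 * (M1 0 1).re = (M3 1 1).re := by
    have := key E1 E3
    rw [cE1, cE3, ← hM1, ← hM3] at this
    simp [Complex.add_re, Complex.sub_re, Complex.mul_re, Complex.conj_re, Complex.conj_im, Complex.I_re, Complex.I_im, m1c] at this
    linarith
  have q14 : 2 * (M1 0 1).im = (M4 1 1).re := by
    have := key E1 E4
    rw [cE1, cE4, ← hM1, ← hM4] at this
    simp [Complex.add_re, Complex.sub_re, Complex.mul_re, Complex.conj_re, Complex.conj_im, Complex.I_re, Complex.I_im, m1c] at this
    linarith
  have q23 : 2 * (M2 0 1).re = (M3 0 0).re := by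
    have := key E2 E3
    rw [cE2, cE3, ← hM2, ← hM3] at this
    simp [Complex.add_re, Complex.sub_re, Complex.mul_re, Complex.conj_re, Complex.conj_im, Complex.I_re, Complex.I_im, m2c] at this
    linarith
  have q24 : 2 * (M2 0 1).im = (M4 0 0).re := by
    have := key E2 E4
    rw [cE2, cE4, ← hM2, ← hM4] at this
    simp [Complex.add_re, Complex.sub_re, Complex.mul_re, Complex.conj_re, Complex.conj_im, Complex.I_re, Complex.I_im, m2c] at this
    linarith
  set A0 : Matrix (Fin 2) (Fin 2) ℂ :=
    !![(((M1 0 0).re/2 : ℝ) : ℂ) + (((M3 0 1).im/2 : ℝ) : ℂ) * Complex.I, M2 0 1;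
      M1 1 0, (((M2 1 1).re/2 : ℝ) : ℂ) - (((M3 0 1).im/2 : ℝ) : ℂ) * Complex.I] with hA0
  refine ⟨A0, ?_, ?_⟩
  · rw [Matrix.trace_fin_two, hA0]
    apply Complex.ext <;>
      simp [Complex.add_re, Complex.add_im, Complex.sub_re, Complex.sub_im, Complex.mul_re,
        Complex.mul_im, Complex.I_re, Complex.I_im, Complex.ofReal_re, Complex.ofReal_im] <;>
      linarith
  · have hE1 : phi A0 E1 = C E1 := by
      apply Subtype.ext
      rw [phi_coe, cE1, ← hM1, hA0]
      ext i j
      fin_cases i <;> fin_cases j <;>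
        simp only [Matrix.add_apply, Matrix.mul_apply, Fin.sum_univ_two,
          Matrix.conjTranspose_apply, Fin.zero_eta, Fin.mk_one] <;>
        simp [m1c, Complex.ext_iff, Complex.add_re, Complex.add_im, Complex.mul_re,
          Complex.mul_im, Complex.I_re, Complex.I_im, Complex.ofReal_re, Complex.ofReal_im,
          Complex.conj_re, Complex.conj_im] <;>
        first
          | linarith
          | (constructor <;> linarith)
    have hE2 : phi A0 E2 = C E2 := by
      apply Subtype.ext
      rw [phi_coe, cE2, ← hM2, hA0]
      ext i j
      fin_cases i <;> fin_cases j <;>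
        simp only [Matrix.add_apply, Matrix.mul_apply, Fin.sum_univ_two,
          Matrix.conjTranspose_apply, Fin.zero_eta, Fin.mk_one] <;>
        simp [m2c, Complex.ext_iff, Complex.add_re, Complex.add_im, Complex.mul_re,
          Complex.mul_im, Complex.I_re, Complex.I_im, Complex.ofReal_re, Complex.ofReal_im,
          Complex.conj_re, Complex.conj_im] <;>
        first
          | linarith
          | (constructor <;> linarith)
    have hE3 : phi A0 E3 = C E3 := by
      apply Subtype.ext
      rw [phi_coe, cE3, ← hM3, hA0]
      ext i j
      fin_cases i <;> fin_cases j <;>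
        simp only [Matrix.add_apply, Matrix.mul_apply, Fin.sum_univ_two,
          Matrix.conjTranspose_apply, Fin.zero_eta, Fin.mk_one] <;>
        simp [m1c, m2c, m3c, Complex.ext_iff, Complex.add_re, Complex.add_im, Complex.mul_re,
          Complex.mul_im, Complex.I_re, Complex.I_im, Complex.ofReal_re, Complex.ofReal_im,
          Complex.conj_re, Complex.conj_im] <;>
        first
          | linarith
          | (constructor <;> linarith)
    have hE4 : phi A0 E4 = C E4 := by
      apply Subtype.ext
      rw [phi_coe, cE4, ← hM4, hA0]
      ext i j
      fin_cases i <;> fin_cases j <;>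
        simp only [Matrix.add_apply, Matrix.mul_apply, Fin.sum_univ_two,
          Matrix.conjTranspose_apply, Fin.zero_eta, Fin.mk_one] <;>
        simp [m1c, m2c, m3c, m4c, Complex.ext_iff, Complex.add_re, Complex.add_im, Complex.mul_re,
          Complex.mul_im, Complex.I_re, Complex.I_im, Complex.ofReal_re, Complex.ofReal_im,
          Complex.conj_re, Complex.conj_im] <;>
        first
          | linarith
          | (constructor <;> linarith)
    apply LinearMap.ext
    intro X
    conv_lhs => rw [span4 X]
    conv_rhs => rw [span4 X]
    simp only [map_add, _root_.map_smul, hE1, hE2, hE3, hE4]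
/-- `φ : sl₂(ℂ) → End_ℝ(Herm₂)`, `φ(A)X = AX + XA†`, is an isomorphism of real Lie
algebras from `sl₂(ℂ)` (as a real Lie algebra) onto the Lie algebra `so(Herm₂, g)` of
`g`-skew-symmetric endomorphisms, `g` being the polarization of the determinant form:
it is a Lie algebra homomorphism, `ℝ`-linear, injective, and its image is exactly
`so(Herm₂, g)`. -/
theorem phi_isom_sl2_so13 :
    (∀ A B : Matrix (Fin 2) (Fin 2) ℂ, A.trace = 0 → B.trace = 0 →
      phi (A * B - B * A) = phi A ∘ₗ phi B - phi B ∘ₗ phi A) ∧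
    (∀ A B : Matrix (Fin 2) (Fin 2) ℂ, A.trace = 0 → B.trace = 0 → ∀ r s : ℝ,
      phi (r • A + s • B) = r • phi A + s • phi B) ∧
    (∀ A B : Matrix (Fin 2) (Fin 2) ℂ, A.trace = 0 → B.trace = 0 →
      phi A = phi B → A = B) ∧
    (∀ C : Herm2 →ₗ[ℝ] Herm2,
      (∀ X Y : Herm2, gdet (C X) Y + gdet X (C Y) = 0) ↔
        ∃ A : Matrix (Fin 2) (Fin 2) ℂ, A.trace = 0 ∧ phi A = C) := by
  refine ⟨fun A B _ _ => part1 A B, fun A B _ _ r s => part2 A B r s, part3,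
    fun C => ⟨reverse_dir C, ?_⟩⟩
  rintro ⟨A, hA, rfl⟩
  exact skew_of_phi A hA
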